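/- Excited state for the equal-mass three-body problem: let α > 2, ω > 0, and m₁ = m₂ = m₃ = 1. The collinear (Euler) relative equilibrium with frequency ω has equal spacings x = [(α/ω²)(1 + 2^{−(α+1)})]^{1/(α+2)} and energy E_linear = 2(α/2 − 1)(1 + 2^{−(α+1)})^{2/(α+2)} (α/ω²)^{−α/(α+2)}; the equilateral (Lagrange) relative equilibrium with frequency ω has mutual distances r = (3α/(2ω²))^{1/(α+2)} and energy E_triangle = 2(α/2 − 1)(3/2)^{2/(α+2)} (α/ω²)^{−α/(α+2)}. Moreover E_linear < E_triangle, so the excited state is the collinear relative equilibrium. -/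

import Mathlib

/- STATEMENT 18: excited state for the equal-mass three-body problem (α > 2): the collinear
relative equilibrium with frequency ω has spacing x = [(α/ω²)(1 + 2^{-(α+1)})]^{1/(α+2)}
(i.e. it satisfies the collinear central-configuration equation) and energy
E_linear = 2(α/2 − 1)(1 + 2^{-(α+1)})^{2/(α+2)} (α/ω²)^{−α/(α+2)}; the equilateral relative
equilibrium has mutual distance r = (3α/(2ω²))^{1/(α+2)} and energy
E_triangle = 2(α/2 − 1)(3/2)^{2/(α+2)} (α/ω²)^{−α/(α+2)}; and E_linear < E_triangle, so the
excited state is the collinear relative equilibrium. -/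

namespace NBodyPaper

open Real

/-- **Excited state for the equal-mass three-body problem** (`α > 2`, `ω > 0`,
`m₁ = m₂ = m₃ = 1`). The collinear relative equilibrium has the middle body at the center
and equal spacings `x`; its potential is `U = −(2 + 2^{−α})/x^α` so its energy is
`−(α/2 − 1) U = (α/2 − 1)(2 + 2^{−α}) x^{−α}`. The equilateral relative equilibrium has all
mutual distances `r`, potential `U = −3/r^α` and energy `(α/2 − 1)·3·r^{−α}`. -/
theorem equal_mass_three_body_excited_state (α ω : ℝ) (hα : 2 < α) (hω : 0 < ω)
    (x r Elinear Etriangle : ℝ)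
    (hx : x = (α / ω ^ 2 * (1 + 2 ^ (-(α + 1)))) ^ (1 / (α + 2)))
    (hr : r = (3 * α / (2 * ω ^ 2)) ^ (1 / (α + 2)))
    (hElin : Elinear = (α / 2 - 1) * (2 + 2 ^ (-α)) * x ^ (-α))
    (hEtri : Etriangle = (α / 2 - 1) * 3 * r ^ (-α)) :
    -- collinear central-configuration equation with equal spacings x:
    ω ^ 2 * x = α * (1 / x ^ (α + 1) + 1 / (2 * x) ^ (α + 1)) ∧
    -- equilateral central-configuration equation with mutual distance r:
    ω ^ 2 * r ^ (α + 2) = 3 * α / 2 ∧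
    -- energy of the collinear relative equilibrium:
    Elinear = 2 * (α / 2 - 1) * (1 + 2 ^ (-(α + 1))) ^ (2 / (α + 2))
        * (α / ω ^ 2) ^ (-(α / (α + 2))) ∧
    -- energy of the equilateral relative equilibrium:
    Etriangle = 2 * (α / 2 - 1) * ((3 : ℝ) / 2) ^ (2 / (α + 2))
        * (α / ω ^ 2) ^ (-(α / (α + 2))) ∧
    -- the collinear relative equilibrium is the excited state:
    Elinear < Etriangle := by
  have hω2 : (0:ℝ) < ω ^ 2 := by positivity
  have hα0 : (0:ℝ) < α := by linarith
  have hs : (0:ℝ) < α + 2 := by linarith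
  have hsne : (α + 2) ≠ 0 := hs.ne'
  set A : ℝ := α / ω ^ 2 with hAdef
  have hApos : 0 < A := div_pos hα0 hω2
  set c : ℝ := 1 + 2 ^ (-(α + 1)) with hcdef
  have hc : 0 < c := by rw [hcdef]; positivity
  have hac : 0 < A * c := mul_pos hApos hc
  have hxpos : 0 < x := by rw [hx]; positivity
  have hrpos : 0 < r := by rw [hr]; positivity
  have hBpos : 0 < 3 * α / (2 * ω ^ 2) := by positivity
  -- generic power identities
  have hxp : ∀ β : ℝ, x ^ β = (A * c) ^ (β / (α + 2)) := by
    intro β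
    rw [hx, ← Real.rpow_mul hac.le, one_div, inv_mul_eq_div]
  have hrp : ∀ β : ℝ, r ^ β = (3 * α / (2 * ω ^ 2)) ^ (β / (α + 2)) := by
    intro β
    rw [hr, ← Real.rpow_mul hBpos.le, one_div, inv_mul_eq_div]
  have hxpow : x ^ (α + 2) = A * c := by
    rw [hxp, div_self hsne, Real.rpow_one]
  have hrpow : r ^ (α + 2) = 3 * α / (2 * ω ^ 2) := by
    rw [hrp, div_self hsne, Real.rpow_one]
  have hxap1 : (0:ℝ) < x ^ (α + 1) := Real.rpow_pos_of_pos hxpos _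
  have key : ω ^ 2 * x ^ (α + 2) = α * c := by
    rw [hxpow, hAdef]; field_simp
  -- Goal 1
  have g1 : ω ^ 2 * x = α * (1 / x ^ (α + 1) + 1 / (2 * x) ^ (α + 1)) := by
    have h2x : (2 * x) ^ (α + 1) = 2 ^ (α + 1) * x ^ (α + 1) :=
      Real.mul_rpow (by norm_num) hxpos.le
    have hxmul : x ^ (α + 2) = x ^ (α + 1) * x := by
      have h := Real.rpow_add_one hxpos.ne' (α + 1)
      rw [show α + 1 + 1 = α + 2 by ring] at h
      exact h
    have hmain : ω ^ 2 * x = α * c / x ^ (α + 1) := by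
      rw [eq_div_iff hxap1.ne', mul_assoc, mul_comm x (x ^ (α + 1)), ← hxmul, key]
    rw [hmain, h2x, hcdef, Real.rpow_neg (by norm_num : (0:ℝ) ≤ 2)]
    have h2p : (0:ℝ) < 2 ^ (α + 1) := Real.rpow_pos_of_pos (by norm_num) _
    field_simp
  -- Goal 2
  have g2 : ω ^ 2 * r ^ (α + 2) = 3 * α / 2 := by
    rw [hrpow]; field_simp
  -- exponent arithmetic
  have hexp : (2:ℝ) / (α + 2) = 1 + -(α / (α + 2)) := by field_simp; ring
  have hAe : 0 < A ^ (-(α / (α + 2))) := Real.rpow_pos_of_pos hApos _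
  -- Goal 3
  have g3 : Elinear = 2 * (α / 2 - 1) * c ^ (2 / (α + 2)) * A ^ (-(α / (α + 2))) := by
    have h2c : (2:ℝ) + 2 ^ (-α) = 2 * c := by
      rw [hcdef]
      have : (2:ℝ) ^ (-α) = 2 ^ (1 + -(α + 1)) := by norm_num
      rw [this, Real.rpow_add (by norm_num : (0:ℝ) < 2), Real.rpow_one]
      ring
    have hxneg : x ^ (-α) = A ^ (-(α / (α + 2))) * c ^ (-(α / (α + 2))) := by
      rw [hxp, Real.mul_rpow hApos.le hc.le, neg_div]
    have hcc : c ^ (2 / (α + 2)) = c * c ^ (-(α / (α + 2))) := by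
      rw [hexp, Real.rpow_add hc, Real.rpow_one]
    rw [hElin, h2c, hxneg, hcc]; ring
  -- Goal 4
  have g4 : Etriangle = 2 * (α / 2 - 1) * ((3:ℝ) / 2) ^ (2 / (α + 2)) * A ^ (-(α / (α + 2))) := by
    have hB : (3:ℝ) * α / (2 * ω ^ 2) = (3 / 2) * A := by
      rw [hAdef]; field_simp
    have hrneg : r ^ (-α) = ((3:ℝ)/2) ^ (-(α / (α + 2))) * A ^ (-(α / (α + 2))) := by
      rw [hrp, hB, Real.mul_rpow (by norm_num) hApos.le, neg_div]
    have hcc : ((3:ℝ)/2) ^ (2 / (α + 2)) = (3/2) * ((3:ℝ)/2) ^ (-(α / (α + 2))) := by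
      rw [hexp, Real.rpow_add (by norm_num : (0:ℝ) < 3/2), Real.rpow_one]
    rw [hEtri, hrneg, hcc]; ring
  refine ⟨g1, g2, g3, g4, ?_⟩
  -- Goal 5
  have hclt : c < 3 / 2 := by
    have : (2:ℝ) ^ (-(α + 1)) < 2 ^ (-1 : ℝ) := by
      apply Real.rpow_lt_rpow_left_iff (by norm_num : (1:ℝ) < 2) |>.mpr
      linarith
    have h2 : (2:ℝ) ^ (-1 : ℝ) = 1 / 2 := by
      rw [Real.rpow_neg_one]; norm_num
    rw [hcdef]; linarith [this.trans_eq h2]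
  have hplt : c ^ (2 / (α + 2)) < ((3:ℝ)/2) ^ (2 / (α + 2)) :=
    Real.rpow_lt_rpow hc.le hclt (by positivity)
  calc Elinear = 2 * (α / 2 - 1) * (c ^ (2 / (α + 2)) * A ^ (-(α / (α + 2)))) := by
        rw [g3]; ring
    _ < 2 * (α / 2 - 1) * (((3:ℝ)/2) ^ (2 / (α + 2)) * A ^ (-(α / (α + 2)))) := by
        apply mul_lt_mul_of_pos_left _ (by linarith)
        exact mul_lt_mul_of_pos_right hplt hAe
    _ = Etriangle := by rw [g4]; ring

end NBodyPaper
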